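/- arXiv:2110.01070 — 3 statements merged into one kernel-verified Lean document; each statement's English description precedes it below -/
import Mathlib

section
/- If every source-to-sink path p satisfies A_{:l_p} = Σ_{ij∈E^f} h^f_{ij} a_{ijp}, then any nonnegative flow ψ = Σ_p α_p a_p contributes Σ_{ij} h^f_{ij} ψ_{ij} = Σ_p α_p A_{:l_p} to the master problem constraints; hence any feasible solution (θ, ψ) of the Graph Generation RMP corresponds to a feasible solution of the master problem over the union of families with the same objective value. -/
/-- `p` is a directed path from `s` to `t` along edges in `E`. -/
def IsPath {V : Type*} (E : Finset (V × V)) (s t : V) (p : List V) : Prop :=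
  p ≠ [] ∧ p.head? = some s ∧ p.getLast? = some t ∧ p.Chain' (fun a b => (a, b) ∈ E)

/-- Number of times the path `p` uses edge `e` (the path indicator). -/
def edgeCount {V : Type*} [DecidableEq V] (p : List V) (e : V × V) : ℕ :=
  (p.zip p.tail).count e

/-!
A flow that decomposes as `ψ = Σ_p α_p a_p` is evaluated against any edge-additive quantity
(a row of `h`, or the edge costs) path by path: exchanging the sums over edges and paths turns
`Σ_{ij} k_{ij} ψ_{ij}` into `Σ_p α_p Σ_{ij} k_{ij} a_{ijp}`, which is `Σ_p α_p K_{l_p}` once `K`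
is compatible with the paths. Adding the weights `α_p` of each family to the columns `l_p`
therefore produces a master problem solution with the same constraint rows and the same cost.
-/

open Finset

section

variable {R E X : Type*} [CommSemiring R] [Fintype E]

theorem sum_mul_eq_sum_mul_of_eq_sum_paths (S : Finset X) (α : X → R) (n : X → E → R)
    {ψ : E → R} (hψ : ∀ e, ψ e = ∑ p ∈ S, α p * n p e)
    (k : E → R) {v : X → R} (hv : ∀ p ∈ S, v p = ∑ e, k e * n p e) :
    ∑ e, k e * ψ e = ∑ p ∈ S, α p * v p := by
  calc ∑ e, k e * ψ e = ∑ p ∈ S, ∑ e, α p * (k e * n p e) := by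
        simp_rw [hψ, mul_sum]
        rw [sum_comm]
        exact sum_congr rfl fun _ _ => sum_congr rfl fun _ _ => by ring
    _ = ∑ p ∈ S, α p * v p := sum_congr rfl fun p hp => by rw [hv p hp, mul_sum]

end

def addPathWeights {R ι X L : Type*} [AddCommMonoid R] [Fintype ι] [DecidableEq L]
    (θ : L → R) (P : ι → Finset X) (α : ι → X → R) (col : ι → X → L) (l : L) : R :=
  θ l + ∑ f, ∑ p ∈ P f with col f p = l, α f p

section

variable {R ι X L : Type*} [Fintype ι] [DecidableEq L]
  (θ : L → R) (P : ι → Finset X) (α : ι → X → R) (col : ι → X → L)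

theorem sum_mul_addPathWeights [CommSemiring R] [Fintype L] (g : L → R) :
    ∑ l, g l * addPathWeights θ P α col l =
      ∑ l, g l * θ l + ∑ f, ∑ p ∈ P f, α f p * g (col f p) := by
  simp only [addPathWeights, mul_add, sum_add_distrib, mul_sum]
  rw [sum_comm]
  congr 1
  refine sum_congr rfl fun f _ => ?_
  rw [← sum_fiberwise (P f) (col f) fun p => α f p * g (col f p)]
  refine sum_congr rfl fun l _ => sum_congr rfl fun p hp => ?_
  rw [(mem_filter.mp hp).2, mul_comm]

theorem addPathWeights_nonneg [AddCommMonoid R] [PartialOrder R] [IsOrderedAddMonoid R]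
    (hθ : ∀ l, 0 ≤ θ l) (hα : ∀ f p, 0 ≤ α f p) (l : L) :
    0 ≤ addPathWeights θ P α col l :=
  add_nonneg (hθ l) (sum_nonneg fun f _ => sum_nonneg fun p _ => hα f p)

theorem exists_of_addPathWeights_ne_zero [AddCommMonoid R] {l : L}
    (hl : addPathWeights θ P α col l ≠ 0) :
    θ l ≠ 0 ∨ ∃ f, ∃ p ∈ P f, col f p = l := by
  by_contra! hcon
  obtain ⟨hθl, hcol⟩ := hcon
  refine hl ?_
  rw [addPathWeights, hθl, zero_add]
  exact sum_eq_zero fun f _ => sum_eq_zero fun p hp =>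
    absurd (mem_filter.mp hp).2 (hcol f p (mem_filter.mp hp).1)

end

theorem gg_rmp_solution_is_mp_solution_general
    {V : Type*} [Fintype V] [DecidableEq V]
    {L : Type*} [Fintype L]   -- the set of columns Ω
    {ι : Type*} [Fintype ι]                   -- the set of generated families F_R
    {m : ℕ}
    (A : L → Fin m → ℝ) (c : L → ℝ) (b : Fin m → ℝ)
    (pathCol : ι → List V → L)                -- the surjection p ↦ l_p onto Ω_f
    (h : ι → V × V → Fin m → ℝ)               -- the vectors h^f_{ij}
    (ce : ι → V × V → ℝ)                      -- the edge costs c^f_{ij}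
    (P : ι → Finset (List V)) (α : ι → List V → ℝ)
    (hA : ∀ f, ∀ p ∈ P f, ∀ i : Fin m,
      A (pathCol f p) i = ∑ e : V × V, h f e i * (edgeCount p e : ℝ))
    (hc : ∀ f, ∀ p ∈ P f,
      c (pathCol f p) = ∑ e : V × V, ce f e * (edgeCount p e : ℝ))
    (hα : ∀ f p, 0 ≤ α f p)
    (ψ : ι → V × V → ℝ)
    (hdecomp : ∀ f, ∀ e : V × V, ψ f e = ∑ p ∈ P f, α f p * (edgeCount p e : ℝ))
    (ΩR : Finset L) (θ : L → ℝ)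
    (hθ : ∀ l, 0 ≤ θ l) (hθsupp : ∀ l ∉ ΩR, θ l = 0)
    (hfeas : ∀ i : Fin m,
      b i ≤ ∑ l ∈ ΩR, A l i * θ l + ∑ f : ι, ∑ e : V × V, h f e i * ψ f e) :
    (∀ f : ι, ∀ i : Fin m,
      ∑ e : V × V, h f e i * ψ f e = ∑ p ∈ P f, α f p * A (pathCol f p) i) ∧
    ∃ θ' : L → ℝ,
      (∀ l, 0 ≤ θ' l) ∧
      (∀ l, θ' l ≠ 0 → l ∈ ΩR ∨ ∃ f : ι, ∃ p ∈ P f, pathCol f p = l) ∧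
      (∀ i : Fin m, b i ≤ ∑ l : L, A l i * θ' l) ∧
      (∑ l : L, c l * θ' l =
        ∑ l ∈ ΩR, c l * θ l + ∑ f : ι, ∑ e : V × V, ce f e * ψ f e) := by
  classical
  have hrows (f : ι) (i : Fin m) :
      ∑ e, h f e i * ψ f e = ∑ p ∈ P f, α f p * A (pathCol f p) i :=
    sum_mul_eq_sum_mul_of_eq_sum_paths _ _ _ (hdecomp f) _ (fun p hp => hA f p hp i)
  have hcost (f : ι) : ∑ e, ce f e * ψ f e = ∑ p ∈ P f, α f p * c (pathCol f p) :=
    sum_mul_eq_sum_mul_of_eq_sum_paths _ _ _ (hdecomp f) _ (hc f)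
  have hsupp (g : L → ℝ) : ∑ l ∈ ΩR, g l * θ l = ∑ l, g l * θ l :=
    sum_subset (subset_univ ΩR) fun l _ hl => by rw [hθsupp l hl, mul_zero]
  refine ⟨hrows, addPathWeights θ P α pathCol, addPathWeights_nonneg θ P α pathCol hθ hα,
    fun l hl => ?_, fun i => ?_, ?_⟩
  · refine (exists_of_addPathWeights_ne_zero θ P α pathCol hl).imp_left fun hθl => ?_
    by_contra hl'
    exact hθl (hθsupp l hl')
  · simpa only [sum_mul_addPathWeights, hsupp, hrows] using hfeas i
  · simp only [sum_mul_addPathWeights, hsupp, hcost]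

/-- If `A_{:l_p} = Σ_{ij} h^f_{ij} a_{ijp}` for every source-to-sink path `p`, then any
nonnegative flow `ψ^f = Σ_p α_p a_p` contributes `Σ_{ij} h^f_{ij} ψ^f_{ij} = Σ_p α_p A_{:l_p}`
to the master problem constraints; hence any feasible solution `(θ, ψ)` of the Graph
Generation RMP corresponds to a feasible master problem solution supported on the union
of the families `Ω_{R2}` with the same objective value. -/
theorem gg_rmp_solution_is_mp_solution
    {V : Type*} [Fintype V] [DecidableEq V]
    {L : Type*} [Fintype L] [DecidableEq L]   -- the set of columns Ω
    {ι : Type*} [Fintype ι]                   -- the set of generated families F_R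
    {m : ℕ}
    (A : L → Fin m → ℝ) (c : L → ℝ) (b : Fin m → ℝ)
    (E : ι → Finset (V × V)) (vplus vminus : V)
    (pathCol : ι → List V → L)                -- the surjection p ↦ l_p onto Ω_f
    (h : ι → V × V → Fin m → ℝ)               -- the vectors h^f_{ij}
    (ce : ι → V × V → ℝ)                      -- the edge costs c^f_{ij}
    (P : ι → Finset (List V)) (α : ι → List V → ℝ)
    (hpath : ∀ f, ∀ p ∈ P f, IsPath (E f) vplus vminus p)
    (hA : ∀ f, ∀ p ∈ P f, ∀ i : Fin m,
      A (pathCol f p) i = ∑ e : V × V, h f e i * (edgeCount p e : ℝ))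
    (hc : ∀ f, ∀ p ∈ P f,
      c (pathCol f p) = ∑ e : V × V, ce f e * (edgeCount p e : ℝ))
    (hα : ∀ f p, 0 ≤ α f p)
    (ψ : ι → V × V → ℝ)
    (hdecomp : ∀ f, ∀ e : V × V, ψ f e = ∑ p ∈ P f, α f p * (edgeCount p e : ℝ))
    (ΩR : Finset L) (θ : L → ℝ)
    (hθ : ∀ l, 0 ≤ θ l) (hθsupp : ∀ l ∉ ΩR, θ l = 0)
    (hfeas : ∀ i : Fin m,
      b i ≤ ∑ l ∈ ΩR, A l i * θ l + ∑ f : ι, ∑ e : V × V, h f e i * ψ f e) :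
    (∀ f : ι, ∀ i : Fin m,
      ∑ e : V × V, h f e i * ψ f e = ∑ p ∈ P f, α f p * A (pathCol f p) i) ∧
    ∃ θ' : L → ℝ,
      (∀ l, 0 ≤ θ' l) ∧
      (∀ l, θ' l ≠ 0 → l ∈ ΩR ∨ ∃ f : ι, ∃ p ∈ P f, pathCol f p = l) ∧
      (∀ i : Fin m, b i ≤ ∑ l : L, A l i * θ' l) ∧
      (∑ l : L, c l * θ' l =
        ∑ l ∈ ΩR, c l * θ l + ∑ f : ι, ∑ e : V × V, ce f e * ψ f e) :=
  gg_rmp_solution_is_mp_solution_general A c b pathCol h ce P α hA hc hα ψ hdecomp ΩR θ hθ hθsupp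
    hfeas
end

section
/- The optimal value Ψ(Ω_{R2}) of the Graph Generation restricted master problem equals the optimal value of the master problem restricted to the union Ω_{R2} = ∪_{l∈Ω_R} Ω_{f_l} of the families of the generated columns; in particular Ψ(Ω_{R2}) ≤ Ψ(Ω_R). -/
/-- Set of objective values of feasible solutions of the master problem restricted to
the column set `S`:  `{ Σ_l c_l θ_l : Σ_l A_{:l} θ_l ≥ b, θ ≥ 0, supp θ ⊆ S }`. -/
def mpValues {L : Type*} [Fintype L] {m : ℕ}
    (A : L → Fin m → ℝ) (c : L → ℝ) (b : Fin m → ℝ) (S : Finset L) : Set ℝ :=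
  {z | ∃ θ : L → ℝ, (∀ l, 0 ≤ θ l) ∧ (∀ l ∉ S, θ l = 0) ∧
    (∀ i, b i ≤ ∑ l : L, A l i * θ l) ∧ z = ∑ l : L, c l * θ l}

/-- `Ψ(S)`: the optimal value of the master problem restricted to columns `S`. -/
noncomputable def Psi {L : Type*} [Fintype L] {m : ℕ}
    (A : L → Fin m → ℝ) (c : L → ℝ) (b : Fin m → ℝ) (S : Finset L) : ℝ :=
  sInf (mpValues A c b S)

/-- Set of objective values of feasible solutions of the Graph Generation RMP (8):
columns `θ` on `Ω_R` together with one nonnegative conservative flow `ψ^f` on the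
family graph `G^{f_l}` of each generated column `l ∈ Ω_R`. -/
def ggValues {L : Type*} [Fintype L] [DecidableEq L] {m : ℕ}
    {V : Type*} [Fintype V] [DecidableEq V]
    (A : L → Fin m → ℝ) (c : L → ℝ) (b : Fin m → ℝ)
    (E : L → Finset (V × V)) (vplus vminus : V)
    (h : L → V × V → Fin m → ℝ) (ce : L → V × V → ℝ)
    (ΩR : Finset L) : Set ℝ :=
  {z | ∃ (θ : L → ℝ) (ψ : L → V × V → ℝ),
    (∀ l, 0 ≤ θ l) ∧ (∀ l ∉ ΩR, θ l = 0) ∧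
    (∀ f, ∀ e, 0 ≤ ψ f e) ∧ (∀ f ∉ ΩR, ψ f = 0) ∧
    (∀ f ∈ ΩR, ∀ e, e ∉ E f → ψ f e = 0) ∧
    (∀ f ∈ ΩR, ∀ i : V, i ≠ vplus → i ≠ vminus →
      ∑ j : V, ψ f (j, i) = ∑ j : V, ψ f (i, j)) ∧
    (∀ i : Fin m,
      b i ≤ ∑ l : L, A l i * θ l + ∑ f : L, ∑ e : V × V, h f e i * ψ f e) ∧
    z = ∑ l : L, c l * θ l + ∑ f : L, ∑ e : V × V, ce f e * ψ f e}


open Finset Relation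

theorem List.sum_count_prod_mk_left {α β : Type*} [Fintype α] [DecidableEq α] [DecidableEq β]
    (l : List (α × β)) (b : β) : ∑ a, l.count (a, b) = (l.map Prod.snd).count b := by
  induction l with
  | nil => simp
  | cons x l ih =>
    simp only [List.count_cons, Finset.sum_add_distrib, ih, List.map_cons, beq_iff_eq]
    obtain ⟨x₁, x₂⟩ := x
    by_cases hx : x₂ = b <;> simp [hx, Prod.ext_iff]

theorem List.sum_count_prod_mk_right {α β : Type*} [Fintype β] [DecidableEq α] [DecidableEq β]
    (l : List (α × β)) (a : α) : ∑ b, l.count (a, b) = (l.map Prod.fst).count a := by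
  induction l with
  | nil => simp
  | cons x l ih =>
    simp only [List.count_cons, Finset.sum_add_distrib, ih, List.map_cons, beq_iff_eq]
    obtain ⟨x₁, x₂⟩ := x
    by_cases hx : x₁ = a <;> simp [hx, Prod.ext_iff]

theorem List.map_fst_zip_tail {α : Type*} (l : List α) :
    (l.zip l.tail).map Prod.fst = l.dropLast := by
  induction l with
  | nil => rfl
  | cons a l ih => cases l with
    | nil => rfl
    | cons b l => simp_all

theorem WellFounded.of_not_transGen_self {α : Type*} [Finite α] {r : α → α → Prop}
    (h : ∀ a, ¬ TransGen r a a) : WellFounded r :=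
  haveI : Std.Irrefl (TransGen r) := ⟨h⟩
  Subrelation.wf TransGen.single (Finite.wellFounded_of_trans_of_irrefl (TransGen r))

theorem WellFounded.reflTransGen_of_exists_pred {α : Type*} {r : α → α → Prop}
    (hwf : WellFounded r) {P : α → Prop} {a : α} (hP : ∀ x, P x → x ≠ a → ∃ y, r y x ∧ P y) :
    ∀ x, P x → ReflTransGen r a x := by
  intro x
  induction x using hwf.induction with
  | _ x ih =>
    intro hx
    by_cases hxa : x = a
    · exact hxa ▸ ReflTransGen.refl
    · obtain ⟨y, hyx, hy⟩ := hP x hx hxa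
      exact (ih y hyx hy).tail hyx

theorem List.IsChain.rel_of_mem_zip_tail {α : Type*} {R : α → α → Prop} :
    ∀ {l : List α}, l.IsChain R → ∀ {x : α × α}, x ∈ l.zip l.tail → R x.1 x.2
  | [], _, _, hx => by simp at hx
  | [_], _, _, hx => by simp at hx
  | a :: b :: l, hl, x, hx => by
    rw [List.isChain_cons_cons] at hl
    rcases List.mem_cons.1 hx with rfl | hx
    · exact hl.1
    · exact hl.2.rel_of_mem_zip_tail hx

section Paths

variable {V : Type*} {E E' : Finset (V × V)} {s t : V} {p : List V}

theorem IsPath.mono (hp : IsPath E s t p) (hE : E ⊆ E') : IsPath E' s t p :=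
  ⟨hp.1, hp.2.1, hp.2.2.1, hp.2.2.2.imp fun _ _ hab => hE hab⟩

theorem exists_isPath_of_transGen (hst : TransGen (fun a b => (a, b) ∈ E) s t) :
    ∃ p, IsPath E s t p ∧ 2 ≤ p.length := by
  induction hst using TransGen.head_induction_on with
  | @single a hat =>
    exact ⟨[a, t], ⟨by simp, rfl, rfl, List.isChain_pair.2 hat⟩, le_rfl⟩
  | @head a c hac _ ih =>
    obtain ⟨p, ⟨hne, hhead, hlast, hchain⟩, hlen⟩ := ih
    refine ⟨a :: p, ⟨List.cons_ne_nil a p, rfl, ?_, ?_⟩, by rw [List.length_cons]; omega⟩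
    · simp [List.getLast?_cons, hlast]
    · exact List.isChain_cons.2 ⟨fun y hy => Option.mem_some_iff.1 (hhead ▸ hy) ▸ hac, hchain⟩

variable [DecidableEq V]

theorem IsPath.mem_of_edgeCount_pos (hp : IsPath E s t p) {e : V × V}
    (he : 0 < edgeCount p e) : e ∈ E :=
  hp.2.2.2.rel_of_mem_zip_tail (List.count_pos_iff.1 he)

theorem exists_edgeCount_pos (hp : 2 ≤ p.length) : ∃ e, 0 < edgeCount p e := by
  match p, hp with
  | a :: b :: _, _ => exact ⟨(a, b), by simp [edgeCount]⟩

variable [Fintype V]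

theorem sum_edgeCount_in (p : List V) (i : V) : ∑ j, edgeCount p (j, i) = p.tail.count i := by
  simp only [edgeCount, List.sum_count_prod_mk_left,
    List.map_snd_zip (List.length_tail ▸ Nat.sub_le _ _)]

theorem sum_edgeCount_out (p : List V) (i : V) :
    ∑ j, edgeCount p (i, j) = p.dropLast.count i := by
  simp only [edgeCount, List.sum_count_prod_mk_right, List.map_fst_zip_tail]

theorem IsPath.sum_edgeCount_in_eq_out (hp : IsPath E s t p) {i : V} (hs : i ≠ s) (ht : i ≠ t) :
    ∑ j, edgeCount p (j, i) = ∑ j, edgeCount p (i, j) := by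
  obtain ⟨hne, hhead, hlast, -⟩ := hp
  have h_tail : p.tail.count i = p.count i := by
    obtain ⟨a, q, rfl⟩ := List.exists_cons_of_ne_nil hne
    simp_all [Ne.symm hs]
  have h_dropLast : p.dropLast.count i = p.count i := by
    rw [List.getLast?_eq_some_getLast hne, Option.some.injEq] at hlast
    conv_rhs => rw [← List.dropLast_concat_getLast hne]
    simp [List.count_append, hlast, Ne.symm ht]
  rw [sum_edgeCount_in, sum_edgeCount_out, h_tail, h_dropLast]

end Paths

section Flows

variable {V : Type*} [Fintype V] {E : Finset (V × V)} {s t : V}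

structure IsFlow (E : Finset (V × V)) (s t : V) (φ : V × V → ℝ) : Prop where
  nonneg : ∀ e, 0 ≤ φ e
  eq_zero_of_notMem : ∀ e ∉ E, φ e = 0
  inflow_eq_outflow : ∀ i, i ≠ s → i ≠ t → ∑ j, φ (j, i) = ∑ j, φ (i, j)

theorem IsFlow.sum {ι : Type*} {P : Finset ι} {w : ι → ℝ} {φ : ι → V × V → ℝ}
    (hw : ∀ k ∈ P, 0 ≤ w k) (hφ : ∀ k ∈ P, IsFlow E s t (φ k)) :
    IsFlow E s t (fun e => ∑ k ∈ P, w k * φ k e) where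
  nonneg e := sum_nonneg fun k hk => mul_nonneg (hw k hk) ((hφ k hk).nonneg e)
  eq_zero_of_notMem e he :=
    sum_eq_zero fun k hk => by rw [(hφ k hk).eq_zero_of_notMem e he, mul_zero]
  inflow_eq_outflow i hs ht := by
    simp only [sum_comm (s := univ), ← mul_sum]
    exact sum_congr rfl fun k hk => by rw [(hφ k hk).inflow_eq_outflow i hs ht]

theorem IsFlow.sub_mul {φ ψ : V × V → ℝ} {δ : ℝ} (hφ : IsFlow E s t φ) (hψ : IsFlow E s t ψ)
    (hle : ∀ e, δ * ψ e ≤ φ e) : IsFlow E s t (fun e => φ e - δ * ψ e) where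
  nonneg e := sub_nonneg.2 (hle e)
  eq_zero_of_notMem e he := by simp [hφ.eq_zero_of_notMem e he, hψ.eq_zero_of_notMem e he]
  inflow_eq_outflow i hs ht := by
    simp only [sum_sub_distrib, ← mul_sum, hφ.inflow_eq_outflow i hs ht,
      hψ.inflow_eq_outflow i hs ht]

theorem IsFlow.exists_pos_in {φ : V × V → ℝ} (hφ : IsFlow E s t φ) {i w : V} (hs : i ≠ s)
    (ht : i ≠ t) (hw : 0 < φ (i, w)) : ∃ j, 0 < φ (j, i) := by
  have hout : 0 < ∑ j, φ (i, j) :=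
    hw.trans_le (single_le_sum (f := fun j => φ (i, j)) (fun j _ => hφ.nonneg _) (mem_univ w))
  rw [← hφ.inflow_eq_outflow i hs ht, ← sum_const_zero] at hout
  obtain ⟨j, -, hj⟩ := exists_lt_of_sum_lt hout
  exact ⟨j, hj⟩

theorem IsFlow.exists_pos_out {φ : V × V → ℝ} (hφ : IsFlow E s t φ) {i w : V} (hs : i ≠ s)
    (ht : i ≠ t) (hw : 0 < φ (w, i)) : ∃ j, 0 < φ (i, j) := by
  have hin : 0 < ∑ j, φ (j, i) :=
    hw.trans_le (single_le_sum (f := fun j => φ (j, i)) (fun j _ => hφ.nonneg _) (mem_univ w))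
  rw [hφ.inflow_eq_outflow i hs ht, ← sum_const_zero] at hin
  obtain ⟨j, -, hj⟩ := exists_lt_of_sum_lt hin
  exact ⟨j, hj⟩

theorem IsPath.isFlow_edgeCount [DecidableEq V] {p : List V} (hp : IsPath E s t p) :
    IsFlow E s t (fun e => edgeCount p e) where
  nonneg _ := Nat.cast_nonneg _
  eq_zero_of_notMem e he := by
    rw [Nat.cast_eq_zero, ← Nat.le_zero, ← not_lt]
    exact fun hpos => he (hp.mem_of_edgeCount_pos hpos)
  inflow_eq_outflow i hs ht := by exact_mod_cast hp.sum_edgeCount_in_eq_out hs ht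

end Flows

section Decomposition

variable {V : Type*} [Fintype V] {E : Finset (V × V)} {s t : V} {φ : V × V → ℝ}

theorem IsFlow.exists_isPath_of_pos (hφ : IsFlow E s t φ)
    (hacyc : ∀ v, ¬ TransGen (fun a b => (a, b) ∈ E) v v)
    (hsource : ∀ u, (u, s) ∉ E) (hsink : ∀ u, (t, u) ∉ E) {u v : V} (huv : 0 < φ (u, v)) :
    ∃ p, IsPath {e ∈ E | 0 < φ e} s t p ∧ 2 ≤ p.length := by
  set r : V → V → Prop := fun a b => (a, b) ∈ {e ∈ E | 0 < φ e}
  have hr : ∀ {a b}, r a b ↔ 0 < φ (a, b) := fun {a b} => by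
    simp only [r, mem_filter, and_iff_right_iff_imp]
    exact fun hab => by_contra fun h => hab.ne' (hφ.eq_zero_of_notMem _ h)
  have hmem : ∀ {a b}, 0 < φ (a, b) → (a, b) ∈ E := fun hab => (mem_filter.1 (hr.2 hab)).1
  have hacyc_r : ∀ v, ¬ TransGen r v v := fun v hv =>
    hacyc v (TransGen.mono (fun _ _ hab => (mem_filter.1 hab).1) _ _ hv)
  -- By conservation a walk along positive edges can be continued backwards from `u` until it
  -- reaches `s` and forwards from `v` until it reaches `t`; acyclicity makes both walks stop.
  have h_su : ReflTransGen r s u := by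
    refine (WellFounded.of_not_transGen_self hacyc_r).reflTransGen_of_exists_pred
      (P := fun x => ∃ w, 0 < φ (x, w)) (fun x ⟨w, hw⟩ hxs => ?_) u ⟨v, huv⟩
    obtain ⟨j, hj⟩ := hφ.exists_pos_in hxs (fun hxt => hsink w (hxt ▸ hmem hw)) hw
    exact ⟨j, hr.2 hj, x, hj⟩
  have h_vt : ReflTransGen r v t := by
    refine reflTransGen_swap.1 ((WellFounded.of_not_transGen_self fun x hx =>
      hacyc_r x (transGen_swap.1 hx)).reflTransGen_of_exists_pred
      (P := fun x => ∃ w, 0 < φ (w, x)) (fun x ⟨w, hw⟩ hxt => ?_) v ⟨u, huv⟩)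
    obtain ⟨j, hj⟩ := hφ.exists_pos_out (fun hxs => hsource w (hxs ▸ hmem hw)) hxt hw
    exact ⟨j, hr.2 hj, x, hj⟩
  exact exists_isPath_of_transGen ((TransGen.tail' h_su (hr.2 huv)).trans_left h_vt)

theorem Finset.exists_pos_mul_le_and_eq {ι : Type*} {T : Finset ι} (hT : T.Nonempty) {φ c : ι → ℝ}
    (hφ : ∀ e ∈ T, 0 < φ e) (hc : ∀ e ∈ T, 0 < c e) :
    ∃ δ > 0, (∀ e ∈ T, δ * c e ≤ φ e) ∧ ∃ e ∈ T, δ * c e = φ e := by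
  obtain ⟨e₀, he₀, hmin⟩ := exists_mem_eq_inf' hT fun e => φ e / c e
  refine ⟨T.inf' hT fun e => φ e / c e, (lt_inf'_iff hT).2 fun e he => div_pos (hφ e he) (hc e he),
    fun e he => ?_, e₀, he₀, ?_⟩
  · exact (le_div_iff₀ (hc e he)).1 (inf'_le _ he)
  · rw [hmin, div_mul_cancel₀ _ (hc e₀ he₀).ne']

variable [DecidableEq V]

theorem IsFlow.exists_peel_path (hφ : IsFlow E s t φ)
    (hacyc : ∀ v, ¬ TransGen (fun a b => (a, b) ∈ E) v v)
    (hsource : ∀ u, (u, s) ∉ E) (hsink : ∀ u, (t, u) ∉ E) {e₀ : V × V} (he₀ : 0 < φ e₀) :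
    ∃ p δ, IsPath E s t p ∧ 0 < δ ∧ IsFlow E s t (fun e => φ e - δ * edgeCount p e) ∧
      #{e | 0 < φ e - δ * edgeCount p e} < #{e | 0 < φ e} := by
  obtain ⟨p, hp, hlen⟩ := hφ.exists_isPath_of_pos hacyc hsource hsink he₀
  have hpos : ∀ e, 0 < edgeCount p e → 0 < φ e := fun e he =>
    (mem_filter.1 (hp.mem_of_edgeCount_pos he)).2
  obtain ⟨e', he'⟩ := exists_edgeCount_pos hlen
  obtain ⟨δ, hδ, hle, e₁, he₁, heq⟩ := Finset.exists_pos_mul_le_and_eq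
    (T := {e | 0 < edgeCount p e}) (φ := φ) (c := fun e => edgeCount p e) ⟨e', by simpa using he'⟩
    (fun e he => hpos e (mem_filter.1 he).2) (fun e he => by simpa using (mem_filter.1 he).2)
  have hle' : ∀ e, δ * edgeCount p e ≤ φ e := fun e => by
    by_cases he : 0 < edgeCount p e
    · exact hle e (by simpa using he)
    · simp [Nat.eq_zero_of_not_pos he, hφ.nonneg e]
  refine ⟨p, δ, hp.mono (filter_subset _ _), hδ,
    hφ.sub_mul (hp.mono (filter_subset _ _)).isFlow_edgeCount hle', card_lt_card ?_⟩
  rw [ssubset_iff_of_subset fun e he => ?_]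
  · exact ⟨e₁, by simpa using hpos e₁ (mem_filter.1 he₁).2, by simp [heq]⟩
  · simp only [mem_filter, mem_univ, true_and] at he ⊢
    exact he.trans_le (sub_le_self _ (by positivity))

theorem IsFlow.exists_path_decomposition (hφ : IsFlow E s t φ)
    (hacyc : ∀ v, ¬ TransGen (fun a b => (a, b) ∈ E) v v)
    (hsource : ∀ u, (u, s) ∉ E) (hsink : ∀ u, (t, u) ∉ E) :
    ∃ μ : List V →₀ ℝ, 0 ≤ μ ∧ (∀ p ∈ μ.support, IsPath E s t p) ∧
      ∀ e, φ e = μ.sum fun p a => a * edgeCount p e := by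
  induction hn : #{e | 0 < φ e} using Nat.strong_induction_on generalizing φ with
  | _ n ih =>
  by_cases hφ0 : ∃ e, 0 < φ e
  · obtain ⟨e₀, he₀⟩ := hφ0
    obtain ⟨p, δ, hp, hδ, hφ', hlt⟩ := hφ.exists_peel_path hacyc hsource hsink he₀
    obtain ⟨μ, hμ0, hμp, hμφ⟩ := ih _ (hn ▸ hlt) hφ' rfl
    refine ⟨μ + Finsupp.single p δ, add_nonneg hμ0 (Finsupp.single_nonneg.2 hδ.le),
      fun q hq => ?_, fun e => ?_⟩
    · rcases mem_union.1 (Finsupp.support_add hq) with hq | hq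
      · exact hμp q hq
      · rwa [mem_singleton.1 (Finsupp.support_single_subset hq)]
    · rw [Finsupp.sum_add_index' (fun _ => zero_mul _) (fun _ _ _ => add_mul _ _ _),
        Finsupp.sum_single_index (zero_mul _), ← hμφ e]
      ring
  · simp only [not_exists, not_lt] at hφ0
    refine ⟨0, le_rfl, by simp, fun e => ?_⟩
    simpa using le_antisymm (hφ0 e) (hφ.nonneg e)

end Decomposition

section PathWeights

-- A weighted family of pairs `k ↦ (f k, q k)`, `q k` a path in the graph of the family `f k`.
-- It induces master columns `θ_l` (total weight of the paths encoding `l`) and one GG flow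
-- `ψ^g` per family `g` (weighted sum of the indicators of its paths).
variable {K L V : Type*} (pathCol : L → List V → L) (P : Finset K) (f : K → L) (q : K → List V)
  (w : K → ℝ)

def columnWeights [DecidableEq L] (l : L) : ℝ :=
  ∑ k ∈ P with pathCol (f k) (q k) = l, w k

def edgeFlows [DecidableEq L] [DecidableEq V] (g : L) (e : V × V) : ℝ :=
  ∑ k ∈ P with f k = g, w k * edgeCount (q k) e

theorem sum_mul_columnWeights [Fintype L] [DecidableEq L] (a : L → ℝ) :
    ∑ l, a l * columnWeights pathCol P f q w l = ∑ k ∈ P, w k * a (pathCol (f k) (q k)) := by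
  rw [← sum_fiberwise P (fun k => pathCol (f k) (q k))]
  refine sum_congr rfl fun l _ => ?_
  rw [columnWeights, mul_sum]
  exact sum_congr rfl fun k hk => by rw [(mem_filter.1 hk).2, mul_comm]

theorem sum_sum_mul_edgeFlows [Fintype L] [DecidableEq L] [Fintype V] [DecidableEq V]
    (W : L → V × V → ℝ) :
    ∑ g, ∑ e, W g e * edgeFlows P f q w g e =
      ∑ k ∈ P, w k * ∑ e, W (f k) e * edgeCount (q k) e := by
  rw [← sum_fiberwise P f]
  refine sum_congr rfl fun g _ => ?_
  simp only [edgeFlows, mul_sum, sum_comm (s := univ)]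
  refine sum_congr rfl fun k hk => sum_congr rfl fun e _ => ?_
  rw [(mem_filter.1 hk).2]
  ring

theorem sum_mul_columnWeights_eq_sum_sum_mul_edgeFlows [Fintype L] [DecidableEq L] [Fintype V]
    [DecidableEq V] {a : L → ℝ} {W : L → V × V → ℝ}
    (hcol : ∀ k ∈ P, a (pathCol (f k) (q k)) = ∑ e, W (f k) e * edgeCount (q k) e) :
    ∑ l, a l * columnWeights pathCol P f q w l = ∑ g, ∑ e, W g e * edgeFlows P f q w g e := by
  rw [sum_mul_columnWeights, sum_sum_mul_edgeFlows]
  exact sum_congr rfl fun k hk => by rw [hcol k hk]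

variable {pathCol P f q w}

theorem isFlow_edgeFlows [DecidableEq L] [Fintype V] [DecidableEq V] {E : L → Finset (V × V)}
    {s t : V} (hw : ∀ k ∈ P, 0 ≤ w k) (hq : ∀ k ∈ P, IsPath (E (f k)) s t (q k)) (g : L) :
    IsFlow (E g) s t (edgeFlows P f q w g) :=
  IsFlow.sum (fun k hk => hw k (mem_filter.1 hk).1) fun k hk => by
    obtain ⟨hkP, rfl⟩ := mem_filter.1 hk
    exact (hq k hkP).isFlow_edgeCount

theorem edgeFlows_eq_zero [DecidableEq L] [DecidableEq V] {R : Finset L} (hf : ∀ k ∈ P, f k ∈ R)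
    {g : L} (hg : g ∉ R) : edgeFlows P f q w g = 0 :=
  funext fun _ => sum_eq_zero fun k hk => by
    obtain ⟨hkP, rfl⟩ := mem_filter.1 hk
    exact absurd (hf k hkP) hg

end PathWeights

section MasterProblems

variable {L : Type*} [Fintype L] {m : ℕ} (A : L → Fin m → ℝ) (c : L → ℝ) (b : Fin m → ℝ)

theorem mpValues_mono {S T : Finset L} (hST : S ⊆ T) : mpValues A c b S ⊆ mpValues A c b T :=
  fun _ ⟨θ, hθ, hθS, hθb, hz⟩ => ⟨θ, hθ, fun l hl => hθS l fun hlS => hl (hST hlS), hθb, hz⟩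

theorem Psi_le_Psi_of_subset {S T : Finset L} (hST : S ⊆ T) (hT : BddBelow (mpValues A c b T))
    (hS : (mpValues A c b S).Nonempty) : Psi A c b T ≤ Psi A c b S :=
  csInf_le_csInf hT hS (mpValues_mono A c b hST)

variable [DecidableEq L] {V : Type*} [Fintype V] [DecidableEq V]
  {E : L → Finset (V × V)} {vplus vminus : V} {h : L → V × V → Fin m → ℝ} {ce : L → V × V → ℝ}
  {ΩR : Finset L}

theorem mem_ggValues_iff {z : ℝ} :
    z ∈ ggValues A c b E vplus vminus h ce ΩR ↔ ∃ (θ : L → ℝ) (ψ : L → V × V → ℝ),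
      (∀ l, 0 ≤ θ l) ∧ (∀ l ∉ ΩR, θ l = 0) ∧
      (∀ g ∈ ΩR, IsFlow (E g) vplus vminus (ψ g)) ∧ (∀ g ∉ ΩR, ψ g = 0) ∧
      (∀ i, b i ≤ ∑ l, A l i * θ l + ∑ g, ∑ e, h g e i * ψ g e) ∧
      z = ∑ l, c l * θ l + ∑ g, ∑ e, ce g e * ψ g e := by
  constructor
  · rintro ⟨θ, ψ, hθ, hθR, hψ, hψR, hψE, hψc, hb, hz⟩
    exact ⟨θ, ψ, hθ, hθR, fun g hg => ⟨hψ g, fun e => hψE g hg e, hψc g hg⟩, hψR, hb, hz⟩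
  · rintro ⟨θ, ψ, hθ, hθR, hψ, hψR, hb, hz⟩
    refine ⟨θ, ψ, hθ, hθR, fun g e => ?_, hψR, fun g hg e => (hψ g hg).eq_zero_of_notMem e,
      fun g hg => (hψ g hg).inflow_eq_outflow, hb, hz⟩
    by_cases hg : g ∈ ΩR
    · exact (hψ g hg).nonneg e
    · rw [hψR g hg, Pi.zero_apply]

end MasterProblems

section GraphGeneration

variable {L : Type*} [Fintype L] [DecidableEq L] {m : ℕ} {A : L → Fin m → ℝ} {c : L → ℝ}
  {b : Fin m → ℝ} {V : Type*} [Fintype V] [DecidableEq V] {E : L → Finset (V × V)}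
  {vplus vminus : V} {h : L → V × V → Fin m → ℝ} {ce : L → V × V → ℝ}
  {pathCol : L → List V → L} {fam : L → Finset L} {ΩR : Finset L}

theorem mpValues_biUnion_subset_ggValues
    (honto : ∀ l₀ ∈ ΩR, ∀ l ∈ fam l₀, ∃ p, IsPath (E l₀) vplus vminus p ∧ pathCol l₀ p = l)
    (hA : ∀ l₀ ∈ ΩR, ∀ p, IsPath (E l₀) vplus vminus p → ∀ i : Fin m,
      A (pathCol l₀ p) i = ∑ e : V × V, h l₀ e i * (edgeCount p e : ℝ))
    (hc : ∀ l₀ ∈ ΩR, ∀ p, IsPath (E l₀) vplus vminus p →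
      c (pathCol l₀ p) = ∑ e : V × V, ce l₀ e * (edgeCount p e : ℝ)) :
    mpValues A c b (ΩR.biUnion fam) ⊆ ggValues A c b E vplus vminus h ce ΩR := by
  set S := ΩR.biUnion fam
  rintro z ⟨θ, hθ, hθS, hθb, rfl⟩
  have h_gen : ∀ l, ∃ g p, l ∈ S → g ∈ ΩR ∧ IsPath (E g) vplus vminus p ∧ pathCol g p = l := by
    intro l
    by_cases hl : l ∈ S
    · obtain ⟨g, hg, hlg⟩ := mem_biUnion.1 hl
      obtain ⟨p, hp, hpl⟩ := honto g hg l hlg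
      exact ⟨g, p, fun _ => ⟨hg, hp, hpl⟩⟩
    · exact ⟨l, [], fun hl' => absurd hl' hl⟩
  choose f q hfq using h_gen
  have hθ_eq : columnWeights pathCol S f q θ = θ := funext fun l => by
    rw [columnWeights, filter_congr fun k hk => by rw [(hfq k hk).2.2], sum_filter, sum_ite_eq']
    split_ifs with hl
    · rfl
    · exact (hθS l hl).symm
  have h_transfer : ∀ (a : L → ℝ) (W : L → V × V → ℝ),
      (∀ k ∈ S, a (pathCol (f k) (q k)) = ∑ e, W (f k) e * edgeCount (q k) e) →
      ∑ l, a l * θ l = ∑ g, ∑ e, W g e * edgeFlows S f q θ g e := fun a W hcol => by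
    calc ∑ l, a l * θ l = ∑ l, a l * columnWeights pathCol S f q θ l := by rw [hθ_eq]
      _ = _ := sum_mul_columnWeights_eq_sum_sum_mul_edgeFlows _ _ _ _ _ hcol
  refine (mem_ggValues_iff A c b).2 ⟨fun _ => 0, edgeFlows S f q θ, fun _ => le_rfl,
    fun _ _ => rfl, fun g _ => isFlow_edgeFlows (fun k _ => hθ k) (fun k hk => (hfq k hk).2.1) g,
    fun g => edgeFlows_eq_zero fun k hk => (hfq k hk).1, fun i => ?_, ?_⟩ <;>
    simp only [mul_zero, sum_const_zero, zero_add]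
  · rw [← h_transfer (A · i) (h · · i) fun k hk => hA _ (hfq k hk).1 _ (hfq k hk).2.1 i]
    exact hθb i
  · exact h_transfer _ _ fun k hk => hc _ (hfq k hk).1 _ (hfq k hk).2.1

theorem ggValues_subset_mpValues_biUnion
    (hself : ∀ l, l ∈ fam l)
    (hinto : ∀ l₀ ∈ ΩR, ∀ p, IsPath (E l₀) vplus vminus p → pathCol l₀ p ∈ fam l₀)
    (hA : ∀ l₀ ∈ ΩR, ∀ p, IsPath (E l₀) vplus vminus p → ∀ i : Fin m,
      A (pathCol l₀ p) i = ∑ e : V × V, h l₀ e i * (edgeCount p e : ℝ))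
    (hc : ∀ l₀ ∈ ΩR, ∀ p, IsPath (E l₀) vplus vminus p →
      c (pathCol l₀ p) = ∑ e : V × V, ce l₀ e * (edgeCount p e : ℝ))
    (hacyc : ∀ l₀ ∈ ΩR, ∀ v : V, ¬ TransGen (fun a b => (a, b) ∈ E l₀) v v)
    (hsource : ∀ l₀ ∈ ΩR, ∀ u : V, (u, vplus) ∉ E l₀)
    (hsink : ∀ l₀ ∈ ΩR, ∀ u : V, (vminus, u) ∉ E l₀) :
    ggValues A c b E vplus vminus h ce ΩR ⊆ mpValues A c b (ΩR.biUnion fam) := by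
  intro z hz
  obtain ⟨θ, ψ, hθ, hθR, hψ, hψR, hb, rfl⟩ := (mem_ggValues_iff A c b).1 hz
  choose! μ hμ hμp hμψ using fun g hg =>
    (hψ g hg).exists_path_decomposition (hacyc g hg) (hsource g hg) (hsink g hg)
  set P := ΩR.sigma fun g => (μ g).support
  set w : (Σ _ : L, List V) → ℝ := fun k => μ k.1 k.2
  have hP : ∀ k ∈ P, k.1 ∈ ΩR ∧ IsPath (E k.1) vplus vminus k.2 := fun k hk => by
    obtain ⟨hk₁, hk₂⟩ := mem_sigma.1 hk
    exact ⟨hk₁, hμp _ hk₁ _ hk₂⟩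
  have hψ_eq : edgeFlows P Sigma.fst Sigma.snd w = ψ := funext fun g => funext fun e => by
    rw [edgeFlows, sum_filter, sum_sigma]
    simp only [sum_ite_irrel, sum_const_zero, sum_ite_eq']
    split_ifs with hg
    · exact (hμψ g hg e).symm
    · rw [hψR g hg, Pi.zero_apply]
  have h_transfer : ∀ (a : L → ℝ) (W : L → V × V → ℝ),
      (∀ k ∈ P, a (pathCol k.1 k.2) = ∑ e, W k.1 e * edgeCount k.2 e) →
      ∑ l, a l * (θ l + columnWeights pathCol P Sigma.fst Sigma.snd w l) =
        ∑ l, a l * θ l + ∑ g, ∑ e, W g e * ψ g e := fun a W hcol => by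
    rw [← hψ_eq, ← sum_mul_columnWeights_eq_sum_sum_mul_edgeFlows _ _ _ _ _ hcol,
      ← sum_add_distrib]
    simp only [mul_add]
  refine ⟨fun l => θ l + columnWeights pathCol P Sigma.fst Sigma.snd w l,
    fun l => add_nonneg (hθ l) (sum_nonneg fun k hk => hμ _ (hP k (mem_filter.1 hk).1).1 _),
    fun l hl => ?_, fun i => ?_, ?_⟩
  · have hθl : θ l = 0 := hθR l fun hlR => hl (mem_biUnion.2 ⟨l, hlR, hself l⟩)
    simp only [hθl, zero_add]
    refine sum_eq_zero fun k hk => absurd ?_ hl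
    obtain ⟨hkP, rfl⟩ := mem_filter.1 hk
    exact mem_biUnion.2 ⟨k.1, (hP k hkP).1, hinto _ (hP k hkP).1 _ (hP k hkP).2⟩
  · rw [h_transfer (A · i) (h · · i) fun k hk => hA _ (hP k hk).1 _ (hP k hk).2 i]
    exact hb i
  · exact (h_transfer _ _ fun k hk => hc _ (hP k hk).1 _ (hP k hk).2).symm

end GraphGeneration

theorem gg_rmp_value_eq_Psi_of_union_of_families_general
    {L : Type*} [Fintype L] [DecidableEq L] {m : ℕ}
    {V : Type*} [Fintype V] [DecidableEq V]
    (A : L → Fin m → ℝ) (c : L → ℝ) (b : Fin m → ℝ)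
    (E : L → Finset (V × V)) (vplus vminus : V)
    (h : L → V × V → Fin m → ℝ) (ce : L → V × V → ℝ)
    (pathCol : L → List V → L)            -- the surjection p ↦ l_p from paths of G^{f} onto Ω_f
    (fam : L → Finset L)                  -- the family Ω_{f_l} of each column l
    (ΩR : Finset L)
    -- each family contains its generating column
    (hself : ∀ l, l ∈ fam l)
    -- source-to-sink paths of G^{f_l} map into the family Ω_{f_l}
    (hinto : ∀ l₀ ∈ ΩR, ∀ p, IsPath (E l₀) vplus vminus p → pathCol l₀ p ∈ fam l₀)
    -- ... surjectively
    (honto : ∀ l₀ ∈ ΩR, ∀ l ∈ fam l₀,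
      ∃ p, IsPath (E l₀) vplus vminus p ∧ pathCol l₀ p = l)
    -- constraint-column consistency of the edge vectors h^f
    (hA : ∀ l₀ ∈ ΩR, ∀ p, IsPath (E l₀) vplus vminus p → ∀ i : Fin m,
      A (pathCol l₀ p) i = ∑ e : V × V, h l₀ e i * (edgeCount p e : ℝ))
    -- cost consistency of the edge costs c^f
    (hc : ∀ l₀ ∈ ΩR, ∀ p, IsPath (E l₀) vplus vminus p →
      c (pathCol l₀ p) = ∑ e : V × V, ce l₀ e * (edgeCount p e : ℝ))
    -- the graphs are DAGs with source `vplus` and sink `vminus`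
    (hacyc : ∀ l₀ ∈ ΩR, ∀ v : V, ¬ Relation.TransGen (fun a b => (a, b) ∈ E l₀) v v)
    (hsource : ∀ l₀ ∈ ΩR, ∀ u : V, (u, vplus) ∉ E l₀)
    (hsink : ∀ l₀ ∈ ΩR, ∀ u : V, (vminus, u) ∉ E l₀)
    -- the LPs attain their optima and are bounded
    (hattR : Psi A c b ΩR ∈ mpValues A c b ΩR)
    (hbddR2 : BddBelow (mpValues A c b (ΩR.biUnion fam))) :
    sInf (ggValues A c b E vplus vminus h ce ΩR) = Psi A c b (ΩR.biUnion fam) ∧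
    Psi A c b (ΩR.biUnion fam) ≤ Psi A c b ΩR := by
  have h_values : ggValues A c b E vplus vminus h ce ΩR = mpValues A c b (ΩR.biUnion fam) :=
    (ggValues_subset_mpValues_biUnion hself hinto hA hc hacyc hsource hsink).antisymm
      (mpValues_biUnion_subset_ggValues honto hA hc)
  exact ⟨congrArg sInf h_values,
    Psi_le_Psi_of_subset A c b (fun l hl => mem_biUnion.2 ⟨l, hl, hself l⟩) hbddR2 ⟨_, hattR⟩⟩

/-- The optimal value of the Graph Generation RMP equals `Ψ(Ω_{R2})`, the optimal value
of the master problem over the union of the families of generated columns; in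
particular it is at most `Ψ(Ω_R)`. -/
theorem gg_rmp_value_eq_Psi_of_union_of_families
    {L : Type*} [Fintype L] [DecidableEq L] {m : ℕ}
    {V : Type*} [Fintype V] [DecidableEq V]
    (A : L → Fin m → ℝ) (c : L → ℝ) (b : Fin m → ℝ)
    (E : L → Finset (V × V)) (vplus vminus : V)
    (h : L → V × V → Fin m → ℝ) (ce : L → V × V → ℝ)
    (pathCol : L → List V → L)            -- the surjection p ↦ l_p from paths of G^{f} onto Ω_f
    (fam : L → Finset L)                  -- the family Ω_{f_l} of each column l
    (ΩR : Finset L)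
    -- each family contains its generating column
    (hself : ∀ l, l ∈ fam l)
    -- source-to-sink paths of G^{f_l} map into the family Ω_{f_l}
    (hinto : ∀ l₀ ∈ ΩR, ∀ p, IsPath (E l₀) vplus vminus p → pathCol l₀ p ∈ fam l₀)
    -- ... surjectively
    (honto : ∀ l₀ ∈ ΩR, ∀ l ∈ fam l₀,
      ∃ p, IsPath (E l₀) vplus vminus p ∧ pathCol l₀ p = l)
    -- constraint-column consistency of the edge vectors h^f
    (hA : ∀ l₀ ∈ ΩR, ∀ p, IsPath (E l₀) vplus vminus p → ∀ i : Fin m,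
      A (pathCol l₀ p) i = ∑ e : V × V, h l₀ e i * (edgeCount p e : ℝ))
    -- cost consistency of the edge costs c^f
    (hc : ∀ l₀ ∈ ΩR, ∀ p, IsPath (E l₀) vplus vminus p →
      c (pathCol l₀ p) = ∑ e : V × V, ce l₀ e * (edgeCount p e : ℝ))
    -- the graphs are DAGs with source `vplus` and sink `vminus`
    (hacyc : ∀ l₀ ∈ ΩR, ∀ v : V, ¬ Relation.TransGen (fun a b => (a, b) ∈ E l₀) v v)
    (hsource : ∀ l₀ ∈ ΩR, ∀ u : V, (u, vplus) ∉ E l₀)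
    (hsink : ∀ l₀ ∈ ΩR, ∀ u : V, (vminus, u) ∉ E l₀)
    -- the LPs attain their optima and are bounded
    (hattR2 : Psi A c b (ΩR.biUnion fam) ∈ mpValues A c b (ΩR.biUnion fam))
    (hattGG : sInf (ggValues A c b E vplus vminus h ce ΩR) ∈
      ggValues A c b E vplus vminus h ce ΩR)
    (hattR : Psi A c b ΩR ∈ mpValues A c b ΩR)
    (hbddR2 : BddBelow (mpValues A c b (ΩR.biUnion fam)))
    (hbddGG : BddBelow (ggValues A c b E vplus vminus h ce ΩR)) :
    sInf (ggValues A c b E vplus vminus h ce ΩR) = Psi A c b (ΩR.biUnion fam) ∧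
    Psi A c b (ΩR.biUnion fam) ≤ Psi A c b ΩR :=
  gg_rmp_value_eq_Psi_of_union_of_families_general A c b E vplus vminus h ce pathCol fam ΩR hself
    hinto honto hA hc hacyc hsource hsink hattR hbddR2
end

section
/- For the expanded topological family graph G^f of CVRP, every source-to-sink path corresponds to a feasible CVRP route: the customers visited are distinct, their order respects the family ordering β^f, the total demand does not exceed the vehicle capacity d_0, and the path cost equals the route's travel distance. -/
/-- Edges of the expanded topological family graph `G^f` for CVRP.  Vertices are
customer/remaining-capacity pairs `(u,d)` (as `Sum.inl`), the source `v⁺ = Sum.inr false`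
and the sink `v⁻ = Sum.inr true`.  `d` are the demands, `d0` the vehicle capacity and
`β` the (injective) ordering of the family. -/
def gEdge {N : Type*} (d : N → ℕ) (d0 : ℕ) (β : N → ℕ) :
    ((N × ℕ) ⊕ Bool) → ((N × ℕ) ⊕ Bool) → Prop
  | Sum.inr false, Sum.inl (u, a) => a + d u = d0
  | Sum.inl (u, a), Sum.inl (v, b) => β u < β v ∧ b + d v = a ∧ a + d u ≤ d0
  | Sum.inl (u, a), Sum.inr true => a + d u ≤ d0
  | _, _ => False

/-- Edge costs in `G^f`: `c_{−1,u}` on source edges, `c_{uv}` on internal edges and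
`c_{u,−2}` on sink edges. -/
def gCost {N : Type*} (cOut cIn : N → ℝ) (cMid : N → N → ℝ) :
    ((N × ℕ) ⊕ Bool) → ((N × ℕ) ⊕ Bool) → ℝ
  | Sum.inr _, Sum.inl (u, _) => cOut u
  | Sum.inl (u, _), Sum.inl (v, _) => cMid u v
  | Sum.inl (u, _), Sum.inr _ => cIn u
  | _, _ => 0

/-- Total edge cost along a list of vertices. -/
def pathCost {N : Type*} (cOut cIn : N → ℝ) (cMid : N → N → ℝ)
    (vs : List ((N × ℕ) ⊕ Bool)) : ℝ :=
  ((vs.zip vs.tail).map (fun e => gCost cOut cIn cMid e.1 e.2)).sum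

section

variable {α N : Type*}

theorem pairwise_lt_of_isChain_lt {γ : Type*} [Preorder γ] (f : α → γ) {l : List α}
    (h : l.IsChain (fun a b => f a < f b)) : l.Pairwise (fun a b => f a < f b) :=
  List.pairwise_map.1 ((List.isChain_map f).2 h).pairwise

/-- Read `a.2` as the capacity left after serving `a.1`. -/
theorem sum_map_fst_le_of_isChain (w : α → ℕ) :
    ∀ (p : α × ℕ) (l : List (α × ℕ)), (p :: l).IsChain (fun a b => b.2 + w b.1 = a.2) →
      (((p :: l).map Prod.fst).map w).sum ≤ p.2 + w p.1
  | p, [], _ => by simp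
  | p, q :: l, h => by
      obtain ⟨hpq, hl⟩ := List.isChain_cons_cons.1 h
      have := sum_map_fst_le_of_isChain w q l hl
      simp only [List.map_cons, List.sum_cons] at this ⊢
      omega

section Cost

variable (cOut cIn : N → ℝ) (cMid : N → N → ℝ)

theorem pathCost_cons_cons (a b : (N × ℕ) ⊕ Bool) (l : List ((N × ℕ) ⊕ Bool)) :
    pathCost cOut cIn cMid (a :: b :: l) =
      gCost cOut cIn cMid a b + pathCost cOut cIn cMid (b :: l) := by
  simp [pathCost]

theorem pathCost_map_inl_append_sink : ∀ (p : N × ℕ) (l : List (N × ℕ)),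
    pathCost cOut cIn cMid ((p :: l).map Sum.inl ++ [Sum.inr true]) =
      (((p :: l).zip l).map (fun e => cMid e.1.1 e.2.1)).sum
        + cIn ((p :: l).getLast (List.cons_ne_nil p l)).1
  | p, [] => by simp [pathCost, gCost]
  | p, q :: l => by
      rw [List.map_cons, List.map_cons, List.cons_append, List.cons_append, pathCost_cons_cons,
        ← List.cons_append, ← List.map_cons, pathCost_map_inl_append_sink q l]
      simp only [gCost, List.zip_cons_cons, List.map_cons, List.sum_cons,
        List.getLast_cons_cons]
      ring

theorem pathCost_source_path (p : N × ℕ) (l : List (N × ℕ)) :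
    pathCost cOut cIn cMid (Sum.inr false :: ((p :: l).map Sum.inl ++ [Sum.inr true])) =
      cOut p.1 + (((p :: l).zip l).map (fun e => cMid e.1.1 e.2.1)).sum
        + cIn ((p :: l).getLast (List.cons_ne_nil p l)).1 := by
  rw [List.map_cons, List.cons_append, pathCost_cons_cons, ← List.cons_append,
    ← List.map_cons, pathCost_map_inl_append_sink, add_assoc]
  rfl

end Cost

theorem isChain_of_gEdge_path {d : N → ℕ} {d0 : ℕ} {β : N → ℕ} {p : N × ℕ}
    {l : List (N × ℕ)}
    (h : (Sum.inr false :: ((p :: l).map Sum.inl ++ [Sum.inr true]) :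
        List ((N × ℕ) ⊕ Bool)).IsChain (gEdge d d0 β)) :
    p.2 + d p.1 = d0 ∧
      (p :: l).IsChain (fun a b => β a.1 < β b.1 ∧ b.2 + d b.1 = a.2 ∧ a.2 + d a.1 ≤ d0) := by
  rw [List.map_cons, List.cons_append, List.isChain_cons_cons, ← List.cons_append,
    ← List.map_cons] at h
  exact ⟨h.1, (List.isChain_map Sum.inl).1 h.2.left_of_append⟩

end

theorem gg_family_path_is_feasible_route_general
    {N : Type*}
    (d : N → ℕ) (d0 : ℕ) (β : N → ℕ)
    (cOut cIn : N → ℝ) (cMid : N → N → ℝ)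
    (seq : List (N × ℕ)) (hne : seq ≠ [])
    (hpath : (Sum.inr false :: (seq.map Sum.inl ++ [Sum.inr true]) :
        List ((N × ℕ) ⊕ Bool)).Chain' (gEdge d d0 β)) :
    (seq.map Prod.fst).Nodup ∧
    (seq.map Prod.fst).Pairwise (fun u v => β u < β v) ∧
    ((seq.map Prod.fst).map d).sum ≤ d0 ∧
    (pathCost cOut cIn cMid
        (Sum.inr false :: (seq.map Sum.inl ++ [Sum.inr true])))
      = cOut (seq.head hne).1
        + ((seq.zip seq.tail).map (fun e => cMid e.1.1 e.2.1)).sum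
        + cIn (seq.getLast hne).1 := by
  obtain ⟨p, l, rfl⟩ := List.exists_cons_of_ne_nil hne
  obtain ⟨hsource, hinner⟩ := isChain_of_gEdge_path hpath
  have hsorted : ((p :: l).map Prod.fst).Pairwise (fun u v => β u < β v) :=
    pairwise_lt_of_isChain_lt β ((List.isChain_map Prod.fst).2 (hinner.imp fun _ _ h => h.1))
  refine ⟨hsorted.imp fun hlt heq => hlt.ne (congrArg β heq), hsorted, ?_,
    pathCost_source_path cOut cIn cMid p l⟩
  calc (((p :: l).map Prod.fst).map d).sum ≤ p.2 + d p.1 :=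
        sum_map_fst_le_of_isChain d p l (hinner.imp fun _ _ h => h.2.1)
    _ = d0 := hsource

/-- Every source-to-sink path in the expanded topological family graph `G^f`
corresponds to a feasible CVRP route: its customers are distinct, visited in an order
consistent with `β^f`, their total demand is at most the capacity `d0`, and the path
cost equals the travel distance of the route. -/
theorem gg_family_path_is_feasible_route
    {N : Type*} [DecidableEq N]
    (d : N → ℕ) (d0 : ℕ) (β : N → ℕ) (hβ : Function.Injective β)
    (cOut cIn : N → ℝ) (cMid : N → N → ℝ)
    (seq : List (N × ℕ)) (hne : seq ≠ [])
    (hpath : (Sum.inr false :: (seq.map Sum.inl ++ [Sum.inr true]) :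
        List ((N × ℕ) ⊕ Bool)).Chain' (gEdge d d0 β)) :
    (seq.map Prod.fst).Nodup ∧
    (seq.map Prod.fst).Pairwise (fun u v => β u < β v) ∧
    ((seq.map Prod.fst).map d).sum ≤ d0 ∧
    (pathCost cOut cIn cMid
        (Sum.inr false :: (seq.map Sum.inl ++ [Sum.inr true])))
      = cOut (seq.head hne).1
        + ((seq.zip seq.tail).map (fun e => cMid e.1.1 e.2.1)).sum
        + cIn (seq.getLast hne).1 :=
  gg_family_path_is_feasible_route_general d d0 β cOut cIn cMid seq hne hpath
end
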